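/- arXiv:1110.0023 — 2 statements merged into one kernel-verified Lean document; each statement's English description precedes it below -/
import Mathlib

section
/- Let P be a Horn constraint program and M a model of P. Then hset(P(Can(P,M))) ∩ M = Can(P,M), where Can(P,M) is the result of the canonical P-computation with respect to M. -/
universe u

/-- A constraint `A = (X, C)`: domain `X` and a family `C` of subsets of `X`. -/
structure Constraint (α : Type u) where
  dom : Set α
  sat : Set (Set α)
  sat_sub : ∀ Y ∈ sat, Y ⊆ dom

/-- `M ⊨ A` iff `M ∩ Dom(A) ∈ C`. -/
def Constraint.Sat {α : Type u} (M : Set α) (A : Constraint α) : Prop :=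
  M ∩ A.dom ∈ A.sat

/-- A constraint is monotone if its satisfying family is closed under supersets
within the domain. -/
def Constraint.Mono {α : Type u} (A : Constraint α) : Prop :=
  ∀ W Y : Set α, W ∈ A.sat → W ⊆ Y → Y ⊆ A.dom → Y ∈ A.sat

/-- A rule `A ← A₁,…,A_k, not(A_{k+1}),…,not(A_m)`. -/
structure Rule (α : Type u) where
  head : Constraint α
  pos : Set (Constraint α)
  neg : Set (Constraint α)

/-- A constraint program is a set of rules. -/
abbrev Program (α : Type u) := Set (Rule α)

def Rule.Horn {α : Type u} (r : Rule α) : Prop := r.neg = ∅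

def Rule.Mono {α : Type u} (r : Rule α) : Prop :=
  r.head.Mono ∧ (∀ A ∈ r.pos, A.Mono) ∧ (∀ A ∈ r.neg, A.Mono)

def Program.Horn {α : Type u} (P : Program α) : Prop := ∀ r ∈ P, r.Horn

def Program.Mono {α : Type u} (P : Program α) : Prop := ∀ r ∈ P, r.Mono

/-- `M` satisfies the body of `r`. -/
def Rule.BodySat {α : Type u} (M : Set α) (r : Rule α) : Prop :=
  (∀ A ∈ r.pos, Constraint.Sat M A) ∧ (∀ A ∈ r.neg, ¬ Constraint.Sat M A)

/-- `P(M)`: the set of `M`-applicable rules of `P`. -/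
def Program.app {α : Type u} (P : Program α) (M : Set α) : Program α :=
  {r ∈ P | r.BodySat M}

/-- `hset(r) = Dom(hd(r))`. -/
def Rule.hset {α : Type u} (r : Rule α) : Set α := r.head.dom

/-- `hset(P)`: union of the headsets of rules of `P`. -/
def Program.hset {α : Type u} (P : Program α) : Set α := ⋃ r ∈ P, r.hset

def Rule.atoms {α : Type u} (r : Rule α) : Set α :=
  r.head.dom ∪ (⋃ A ∈ r.pos, A.dom) ∪ (⋃ A ∈ r.neg, A.dom)

/-- `At(P)`: atoms occurring in domains of constraints of `P`. -/
def Program.atoms {α : Type u} (P : Program α) : Set α := ⋃ r ∈ P, r.atoms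

/-- `M` is a model of `P`. -/
def Program.IsModel {α : Type u} (P : Program α) (M : Set α) : Prop :=
  ∀ r ∈ P, r.BodySat M → Constraint.Sat M r.head

/-- `M` is a supported model of `P`. -/
def Program.Supported {α : Type u} (P : Program α) (M : Set α) : Prop :=
  P.IsModel M ∧ M ⊆ (P.app M).hset

/-- The nondeterministic one-step provability operator `T_P^nd`. -/
def Program.Tnd {α : Type u} (P : Program α) (M : Set α) : Set (Set α) :=
  {M' | M' ⊆ (P.app M).hset ∧ ∀ r ∈ P.app M, Constraint.Sat M' r.head}

/-- A `P`-computation: a transfinite sequence starting at `∅`, increasing, with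
each successor step nondeterministically one-step provable, continuous at limits. -/
structure PComputation {α : Type u} (P : Program α) where
  X : Ordinal.{u} → Set α
  zero : X 0 = ∅
  incr : ∀ o, X o ⊆ X (o + 1)
  step : ∀ o, X (o + 1) ∈ P.Tnd (X o)
  limit : ∀ o : Ordinal.{u}, Order.IsSuccLimit o → X o = ⋃ β < o, X β

/-- The result `R_t` of a computation. -/
def PComputation.result {α : Type u} {P : Program α} (t : PComputation P) : Set α :=
  ⋃ o, t.X o

/-- `M` is a derivable model of `P`: the result of some `P`-computation. -/
def Program.Derivable {α : Type u} (P : Program α) (M : Set α) : Prop :=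
  ∃ t : PComputation P, t.result = M

/-- The canonical sequence `t^{P,M}`: `X₀ = ∅`, `X_{β+1} = hset(P(X_β)) ∩ M`,
unions at limits. -/
noncomputable def canSeq {α : Type u} (P : Program α) (M : Set α) (o : Ordinal.{u}) :
    Set α :=
  Ordinal.limitRecOn o ∅ (fun _ ih => (P.app ih).hset ∩ M)
    (fun o _ ih => ⋃ β : Ordinal.{u}, ⋃ h : β < o, ih β h)

/-- `Can(P,M)`: the result of the canonical computation. -/
noncomputable def Can {α : Type u} (P : Program α) (M : Set α) : Set α :=
  ⋃ o, canSeq P M o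

/-- The reduct of a single rule: drop negated literals. -/
def Rule.pos_part {α : Type u} (r : Rule α) : Rule α := ⟨r.head, r.pos, ∅⟩

/-- The reduct `P^M`. -/
def Program.reduct {α : Type u} (P : Program α) (M : Set α) : Program α :=
  {r' | ∃ r ∈ P, (∀ A ∈ r.neg, ¬ Constraint.Sat M A) ∧ r' = r.pos_part}

/-- `M` is a stable model of `P`: a derivable model of the reduct `P^M`. -/
def Program.Stable {α : Type u} (P : Program α) (M : Set α) : Prop :=
  (P.reduct M).Derivable M

/-- `N ⊨_M P`: `N` is an `M`-maximal model of the Horn program `P`. -/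
def Program.MMax {α : Type u} (P : Program α) (M N : Set α) : Prop :=
  N ⊆ M ∧ P.IsModel N ∧ M ∩ (P.app N).hset ⊆ N

/-- `(X,Y)` is an SE-model of `P`. -/
def Program.SE {α : Type u} (P : Program α) (X Y : Set α) : Prop :=
  X ⊆ Y ∧ P.IsModel Y ∧ (P.reduct Y).MMax Y X

/-- `(X,Y)` is a UE-model of `P`. -/
def Program.UE {α : Type u} (P : Program α) (X Y : Set α) : Prop :=
  P.SE X Y ∧ ∀ X', P.SE X' Y → X ⊆ X' → X = X' ∨ X' = Y

/-- Strong equivalence of monotone-constraint programs. -/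
def StrongEq {α : Type u} (P Q : Program α) : Prop :=
  ∀ R : Program α, R.Mono → ∀ M : Set α, (P ∪ R).Stable M ↔ (Q ∪ R).Stable M

/-- The rule `(D,{D}) ←`. -/
def factRule {α : Type u} (D : Set α) : Rule α :=
  ⟨⟨D, {D}, fun Y hY => by simp only [Set.mem_singleton_iff] at hY; simp [hY]⟩, ∅, ∅⟩

/-- Uniform equivalence of monotone-constraint programs. -/
def UnifEq {α : Type u} (P Q : Program α) : Prop :=
  ∀ D : Set α, ∀ M : Set α,
    (P ∪ {factRule D}).Stable M ↔ (Q ∪ {factRule D}).Stable M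

/-- `P` is tight on `M`. -/
def Program.Tight {α : Type u} (P : Program α) (M : Set α) : Prop :=
  ∃ lam : α → Ordinal.{u}, ∀ r ∈ P.app M, ∀ x ∈ M ∩ r.hset,
    ∀ a ∈ M ∩ (⋃ A ∈ r.pos, A.dom), lam a < lam x


/-!
For a Horn program with monotone constraints, `N ↦ hset(P(N)) ∩ M` is monotone, so the canonical
sequence is increasing. An increasing family of subsets of `α` indexed by `Ordinal.{u}` cannot grow
at every stage: each of its elements appears at some stage, and these `α`-many stages are bounded
by a single ordinal `o`. Hence `Can(P,M) = X_o = X_{o+1} = hset(P(X_o)) ∩ M`.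
-/

open Set Order

namespace Program

variable {α : Type u}

theorem hset_mono {P Q : Program α} (h : P ⊆ Q) : P.hset ⊆ Q.hset :=
  biUnion_subset_biUnion_left h

theorem app_mono {P : Program α} (hHorn : P.Horn) (hMono : P.Mono) : Monotone P.app := by
  rintro N N' h r ⟨hrP, hpos, -⟩
  refine ⟨hrP, fun A hA => ?_, fun A hA => ?_⟩
  · exact (hMono r hrP).2.1 A hA _ _ (hpos A hA) (inter_subset_inter_left _ h)
      inter_subset_right
  · exact absurd (hHorn r hrP ▸ hA) (notMem_empty A)

end Program

section TransfiniteIteration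

variable {α : Type u} {F : Set α → Set α} {X : Ordinal.{u} → Set α}

theorem monotone_of_transfinite_iterate (hF : Monotone F) (h0 : X 0 ⊆ F (X 0))
    (hsucc : ∀ o, X (o + 1) = F (X o))
    (hlim : ∀ o, IsSuccLimit o → X o = ⋃ β < o, X β) : Monotone X := by
  have hX_succ : ∀ o, X o ⊆ X (o + 1) := by
    intro o
    induction o using Ordinal.limitRecOn with
    | zero => rw [hsucc]; exact h0
    | add_one o ih => rw [hsucc, hsucc]; exact hF ih
    | limit o ho ih =>
      rw [hsucc, hlim o ho]
      refine iUnion₂_subset fun β hβ => (ih β hβ).trans ?_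
      rw [hsucc, ← hlim o ho]
      exact hF (hlim o ho ▸ subset_biUnion_of_mem hβ)
  intro β γ hβγ
  induction γ using Ordinal.limitRecOn with
  | zero => rw [nonpos_iff_eq_zero.mp hβγ]
  | add_one γ ih =>
    rcases le_succ_iff_eq_or_le.mp hβγ with rfl | hβγ
    · rfl
    · exact (ih hβγ).trans (hX_succ γ)
  | limit γ hγ _ =>
    rcases hβγ.eq_or_lt with rfl | hβγ
    · rfl
    · exact hlim γ hγ ▸ subset_biUnion_of_mem hβγ

theorem exists_iUnion_eq_of_monotone (hX : Monotone X) : ∃ o, ⋃ β, X β = X o := by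
  choose stage hstage using fun x : ↥(⋃ β, X β) => mem_iUnion.mp x.2
  refine ⟨⨆ x, stage x, (iUnion_subset_iff.mpr fun β x hx => ?_).antisymm (subset_iUnion X _)⟩
  exact hX (Ordinal.le_iSup stage ⟨x, mem_iUnion_of_mem β hx⟩) (hstage _)

theorem iUnion_transfinite_iterate_isFixedPt (hF : Monotone F) (h0 : X 0 ⊆ F (X 0))
    (hsucc : ∀ o, X (o + 1) = F (X o))
    (hlim : ∀ o, IsSuccLimit o → X o = ⋃ β < o, X β) : F (⋃ o, X o) = ⋃ o, X o := by
  have hX := monotone_of_transfinite_iterate hF h0 hsucc hlim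
  obtain ⟨o, ho⟩ := exists_iUnion_eq_of_monotone hX
  have hstable : X (o + 1) = X o := (ho ▸ subset_iUnion X (o + 1)).antisymm (hX le_self_add)
  rw [ho, ← hsucc, hstable]

end TransfiniteIteration

section CanonicalSequence

variable {α : Type u} (P : Program α) (M : Set α)

theorem canSeq_zero : canSeq P M 0 = ∅ :=
  Ordinal.limitRecOn_zero _ _ _

theorem canSeq_add_one (o : Ordinal.{u}) :
    canSeq P M (o + 1) = (P.app (canSeq P M o)).hset ∩ M :=
  Ordinal.limitRecOn_add_one _ _ _ _

theorem canSeq_of_isSuccLimit {o : Ordinal.{u}} (ho : IsSuccLimit o) :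
    canSeq P M o = ⋃ β < o, canSeq P M β :=
  Ordinal.limitRecOn_limit _ _ _ _ ho

end CanonicalSequence

theorem canonical_fixpoint_general {α : Type u} (P : Program α) (hHorn : P.Horn)
    (hMono : P.Mono) (M : Set α) :
    (P.app (Can P M)).hset ∩ M = Can P M := by
  have hstep : Monotone fun N => (P.app N).hset ∩ M := fun N N' h =>
    inter_subset_inter_left M (Program.hset_mono (Program.app_mono hHorn hMono h))
  exact iUnion_transfinite_iterate_isFixedPt hstep (canSeq_zero P M ▸ empty_subset _)
    (canSeq_add_one P M) (fun _ => canSeq_of_isSuccLimit P M)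

/-- Fixpoint property of the canonical computation. -/
theorem canonical_fixpoint {α : Type u} (P : Program α) (hHorn : P.Horn)
    (hMono : P.Mono) (M : Set α) (hMod : P.IsModel M) :
    (P.app (Can P M)).hset ∩ M = Can P M :=
  canonical_fixpoint_general P hHorn hMono M
end

section
/- Two monotone-constraint programs P and Q are strongly equivalent if and only if SE(P) = SE(Q). -/
universe u

/-!
For a monotone program `P`, `Y` is a stable model iff `(Y, Y)` is the only SE-model of `P` with
second component `Y`: the derivable models of a Horn program `H` are the models `M` of `H` that
are the only `M`-maximal model of `H` inside themselves, since the least fixed point of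
`S ↦ hset(H(S)) ∩ M` is derivable and `M`-maximal, while every `M`-maximal model contains every
stage of a computation. As SE-models of `P ∪ R` are the common SE-models of `P` and `R`, equal
SE-models give strong equivalence.

Conversely, for `X ⊆ Y` the Horn program `{X ←} ∪ {Y ← y | y ∈ Y \ X}` has exactly `(X, Y)` and
`(Y, Y)` as SE-models with second component `Y`. Adding it to `P` makes `Y` stable iff `Y ⊨ P`
and `(X, Y)` is not an SE-model of `P` (for `X ≠ Y`), so it separates two programs whose
SE-models differ at `(X, Y)`.
-/

open OrdinalApprox

theorem monotone_of_le_add_one_of_isSuccLimit {β : Type*} [Preorder β] {f : Ordinal.{u} → β}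
    (hs : ∀ o, f o ≤ f (o + 1)) (hl : ∀ o, Order.IsSuccLimit o → ∀ a < o, f a ≤ f o) :
    Monotone f := by
  intro a b hab
  induction b using Ordinal.limitRecOn with
  | zero => rw [nonpos_iff_eq_zero.mp hab]
  | add_one c ih =>
    rcases hab.eq_or_lt with rfl | hlt
    · exact le_rfl
    · exact (ih (Order.lt_add_one_iff.mp hlt)).trans (hs c)
  | limit b hb _ =>
    rcases hab.eq_or_lt with rfl | hlt
    · exact le_rfl
    · exact hl b hb a hlt

theorem exists_iUnion_eq_of_monotone_s12 {α : Type u} {X : Ordinal.{u} → Set α} (hX : Monotone X) :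
    ∃ o, ⋃ i, X i = X o := by
  choose f hf using fun a : ⋃ i, X i => Set.mem_iUnion.mp a.2
  refine ⟨⨆ a, f a, (Set.subset_iUnion X _).antisymm' fun a ha => ?_⟩
  exact hX (Ordinal.le_iSup f ⟨a, ha⟩) (hf ⟨a, ha⟩)

variable {α : Type u}

theorem Constraint.Sat.mono {A : Constraint α} {X Y : Set α} (h : Constraint.Sat X A)
    (hA : A.Mono) (hXY : X ⊆ Y) : Constraint.Sat Y A :=
  hA _ _ h (Set.inter_subset_inter_left _ hXY) Set.inter_subset_right

theorem Constraint.sat_inter_iff {A : Constraint α} {S M : Set α} (hdom : A.dom ⊆ S) :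
    Constraint.Sat (S ∩ M) A ↔ Constraint.Sat M A := by
  rw [Constraint.Sat, Constraint.Sat, Set.inter_comm S, Set.inter_assoc,
    Set.inter_eq_right.mpr hdom]

theorem Rule.BodySat.mono {r : Rule α} {X Y : Set α} (h : r.BodySat X) (hr : r.Horn)
    (hm : r.Mono) (hXY : X ⊆ Y) : r.BodySat Y :=
  ⟨fun A hA => (h.1 A hA).mono (hm.2.1 A hA) hXY,
    fun A hA => by simp [show r.neg = ∅ from hr] at hA⟩

theorem Rule.Horn.pos_part_eq {r : Rule α} (hr : r.Horn) : r.pos_part = r := by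
  cases r
  simp_all [Rule.Horn, Rule.pos_part]

namespace Program

variable {P R H : Program α} {M X Y : Set α}

theorem app_mono_s12 (hH : H.Horn) (hm : H.Mono) : Monotone H.app :=
  fun _ _ hXY r hr => ⟨hr.1, hr.2.mono (hH r hr.1) (hm r hr.1) hXY⟩

theorem hset_mono_s12 : Monotone (Program.hset : Program α → Set α) :=
  fun _ _ h => Set.biUnion_subset_biUnion_left h

theorem subset_hset {r : Rule α} (hr : r ∈ H) : r.hset ⊆ H.hset :=
  Set.subset_biUnion_of_mem hr

theorem Mono.union (hP : P.Mono) (hR : R.Mono) : (P ∪ R).Mono := by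
  rintro r (hr | hr)
  exacts [hP r hr, hR r hr]

theorem isModel_union : (P ∪ R).IsModel M ↔ P.IsModel M ∧ R.IsModel M := by
  simp only [IsModel, Set.mem_union, or_imp, forall_and]

theorem app_union : (P ∪ R).app M = P.app M ∪ R.app M :=
  Set.sep_union

theorem hset_union : (P ∪ R).hset = P.hset ∪ R.hset :=
  Set.biUnion_union P R _

theorem reduct_union : (P ∪ R).reduct M = P.reduct M ∪ R.reduct M := by
  ext r'
  simp only [reduct, Set.mem_ofPred_eq, Set.mem_union, or_and_right, exists_or]

theorem mmax_union : (P ∪ R).MMax M X ↔ P.MMax M X ∧ R.MMax M X := by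
  simp only [MMax, isModel_union, app_union, hset_union, Set.inter_union_distrib_left,
    Set.union_subset_iff]
  tauto

theorem se_union : (P ∪ R).SE X Y ↔ P.SE X Y ∧ R.SE X Y := by
  simp only [SE, isModel_union, reduct_union, mmax_union]
  tauto

theorem reduct_horn (P : Program α) (M : Set α) : (P.reduct M).Horn := by
  rintro _ ⟨r, -, -, rfl⟩
  rfl

theorem Mono.reduct (hP : P.Mono) (M : Set α) : (P.reduct M).Mono := by
  rintro _ ⟨r, hr, -, rfl⟩
  exact ⟨(hP r hr).1, (hP r hr).2.1, by simp [Rule.pos_part]⟩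

theorem Horn.reduct_eq (hH : H.Horn) (M : Set α) : H.reduct M = H := by
  ext r
  constructor
  · rintro ⟨r, hr, -, rfl⟩
    rwa [(hH r hr).pos_part_eq]
  · intro hr
    exact ⟨r, hr, fun A hA => by simp [show r.neg = ∅ from hH r hr] at hA,
      ((hH r hr).pos_part_eq).symm⟩

theorem isModel_reduct_self : (P.reduct M).IsModel M ↔ P.IsModel M := by
  constructor
  · intro h r hr hb
    exact h r.pos_part ⟨r, hr, hb.2, rfl⟩ ⟨hb.1, by simp [Rule.pos_part]⟩
  · rintro h _ ⟨r, hr, hneg, rfl⟩ hb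
    exact h r hr ⟨hb.1, hneg⟩

end Program

namespace PComputation

variable {P : Program α} (t : PComputation P)

theorem monotone : Monotone t.X :=
  monotone_of_le_add_one_of_isSuccLimit t.incr fun o ho a ha => by
    rw [t.limit o ho]
    exact Set.subset_iUnion₂ (s := fun β (_ : β < o) => t.X β) a ha

theorem exists_eq_result : ∃ o, t.X o = t.result ∧ t.X (o + 1) = t.result := by
  obtain ⟨o, ho⟩ := exists_iUnion_eq_of_monotone_s12 t.monotone
  refine ⟨o, ho.symm, (Set.subset_iUnion t.X (o + 1)).antisymm ?_⟩
  exact ho.symm ▸ t.incr o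

theorem isModel_result : P.IsModel t.result := by
  intro r hr hb
  obtain ⟨o, ho, ho'⟩ := t.exists_eq_result
  rw [← ho']
  exact (t.step o).2 r ⟨hr, ho ▸ hb⟩

theorem result_subset (hP : P.Horn) (hm : P.Mono) {N : Set α}
    (hN : t.result ∩ (P.app N).hset ⊆ N) : t.result ⊆ N := by
  refine Set.iUnion_subset fun o => ?_
  induction o using Ordinal.limitRecOn with
  | zero => simp [t.zero]
  | add_one o ih =>
    refine fun a ha => hN ⟨Set.subset_iUnion t.X (o + 1) ha, ?_⟩
    exact Program.hset_mono_s12 (Program.app_mono_s12 hP hm ih) ((t.step o).1 ha)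
  | limit o ho ih =>
    rw [t.limit o ho]
    exact Set.iUnion₂_subset ih

end PComputation

namespace Program

variable {P H : Program α} {M : Set α}

/-- The step map of the canonical computation `canSeq H M`. -/
def provOp (H : Program α) (hH : H.Horn) (hm : H.Mono) (M : Set α) : Set α →o Set α where
  toFun S := (H.app S).hset ∩ M
  monotone' _ _ h := Set.inter_subset_inter_left M (hset_mono_s12 (app_mono_s12 hH hm h))

theorem sat_provOp_head (hH : H.Horn) (hm : H.Mono) (hM : H.IsModel M) {S : Set α}
    (hS : S ⊆ M) {r : Rule α} (hr : r ∈ H.app S) : Constraint.Sat (H.provOp hH hm M S) r.head :=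
  (Constraint.sat_inter_iff (subset_hset hr)).mpr
    (hM r hr.1 (hr.2.mono (hH r hr.1) (hm r hr.1) hS))

theorem mmax_lfp_provOp (hH : H.Horn) (hm : H.Mono) (hM : H.IsModel M) :
    H.MMax M (H.provOp hH hm M).lfp := by
  have hfix : H.provOp hH hm M (H.provOp hH hm M).lfp = (H.provOp hH hm M).lfp :=
    OrderHom.map_lfp _
  have hsub : (H.provOp hH hm M).lfp ⊆ M := hfix ▸ Set.inter_subset_right
  refine ⟨hsub, fun r hr hb => ?_, fun a ha => hfix ▸ ⟨ha.2, ha.1⟩⟩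
  exact hfix ▸ sat_provOp_head hH hm hM hsub ⟨hr, hb⟩

theorem derivable_lfp_provOp (hH : H.Horn) (hm : H.Mono) (hM : H.IsModel M) :
    H.Derivable (H.provOp hH hm M).lfp := by
  set F := H.provOp hH hm M
  have hsucc (o : Ordinal.{u}) : lfpApprox F ⊥ (o + 1) = F (lfpApprox F ⊥ o) :=
    lfpApprox_add_one F bot_le o
  refine ⟨⟨lfpApprox F ⊥, lfpApprox_zero F, fun o => lfpApprox_mono_right F (lt_add_one o).le,
    fun o => ?_, fun o ho => ?_⟩, ?_⟩
  · have hsub : lfpApprox F ⊥ o ⊆ M :=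
      (lfpApprox_mono_right F (lt_add_one o).le).trans (hsucc o ▸ Set.inter_subset_right)
    rw [hsucc]
    exact ⟨Set.inter_subset_left, fun r hr => sat_provOp_head hH hm hM hsub hr⟩
  · rw [lfpApprox_of_isSuccLimit F ho, iSup_subtype]
    rfl
  · exact (iSup_lfpApprox_eq_of_mem_fixedPoints F (lfpApprox_ord_mem_fixedPoint F bot_le)).trans
      (lfpApprox_ord_eq_lfp F)

theorem Horn.derivable_iff (hH : H.Horn) (hm : H.Mono) :
    H.Derivable M ↔ H.IsModel M ∧ ∀ X, H.MMax M X → X = M := by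
  constructor
  · rintro ⟨t, rfl⟩
    exact ⟨t.isModel_result, fun X hX => hX.1.antisymm (t.result_subset hH hm hX.2.2)⟩
  · rintro ⟨hM, huniq⟩
    exact huniq _ (mmax_lfp_provOp hH hm hM) ▸ derivable_lfp_provOp hH hm hM

theorem se_self_iff : P.SE M M ↔ P.IsModel M := by
  simp only [SE, MMax, isModel_reduct_self, Set.Subset.rfl, Set.inter_subset_left]
  tauto

theorem Mono.stable_iff (hP : P.Mono) : P.Stable M ↔ P.SE M M ∧ ∀ X, P.SE X M → X = M := by
  rw [Stable, Horn.derivable_iff (reduct_horn P M) (hP.reduct M), isModel_reduct_self,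
    se_self_iff]
  exact and_congr_right fun hM => forall_congr' fun X =>
    imp_congr_left ⟨fun h => ⟨h.1, hM, h⟩, fun h => h.2.2⟩

end Program

theorem sat_factRule_head_iff {D M : Set α} : Constraint.Sat M (factRule D).head ↔ D ⊆ M :=
  Set.mem_singleton_iff.trans Set.inter_eq_right

theorem factRule_head_mono (D : Set α) : (factRule D).head.Mono := by
  rintro W Z rfl hWZ hZD
  exact Set.mem_singleton_iff.mpr (hZD.antisymm hWZ)

def condFactRule (y : α) (D : Set α) : Rule α :=
  ⟨(factRule D).head, {(factRule {y}).head}, ∅⟩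

@[simp]
theorem factRule_bodySat (D M : Set α) : (factRule D).BodySat M := by
  simp [Rule.BodySat, factRule]

@[simp]
theorem condFactRule_head (y : α) (D : Set α) : (condFactRule y D).head = (factRule D).head :=
  rfl

@[simp]
theorem condFactRule_bodySat_iff {y : α} {D M : Set α} :
    (condFactRule y D).BodySat M ↔ y ∈ M := by
  simp [Rule.BodySat, condFactRule, sat_factRule_head_iff]

def seWitness (X Y : Set α) : Program α :=
  insert (factRule X) ((condFactRule · Y) '' (Y \ X))

namespace seWitness

variable {X Y Z : Set α}

theorem horn : (seWitness X Y).Horn := by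
  rintro r (rfl | ⟨y, -, rfl⟩) <;> rfl

theorem mono : (seWitness X Y).Mono := by
  rintro r (rfl | ⟨y, -, rfl⟩)
  · exact ⟨factRule_head_mono X, by simp [factRule], by simp [factRule]⟩
  · refine ⟨factRule_head_mono Y, ?_, by simp [condFactRule]⟩
    simpa [condFactRule] using factRule_head_mono {y}

theorem isModel_iff : (seWitness X Y).IsModel Z ↔ X ⊆ Z ∧ ∀ y ∈ Y \ X, y ∈ Z → Y ⊆ Z := by
  simp only [Program.IsModel, seWitness, Set.forall_mem_insert, Set.forall_mem_image,
    factRule_bodySat, forall_const, condFactRule_bodySat_iff, condFactRule_head,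
    sat_factRule_head_iff]

theorem hset_app_subset (h : (seWitness X Y).IsModel Z) :
    ((seWitness X Y).app Z).hset ⊆ Z := by
  refine Set.iUnion₂_subset fun r hr => ?_
  have hsat := h r hr.1 hr.2
  rcases hr.1 with rfl | ⟨y, -, rfl⟩ <;> exact sat_factRule_head_iff.mp hsat

theorem se_iff (hXY : X ⊆ Y) : (seWitness X Y).SE Z Y ↔ Z = X ∨ Z = Y := by
  have hY : (seWitness X Y).IsModel Y := isModel_iff.mpr ⟨hXY, fun _ _ _ => subset_rfl⟩
  rw [Program.SE, horn.reduct_eq]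
  constructor
  · rintro ⟨hZY, -, -, hZ, -⟩
    obtain ⟨hXZ, hcond⟩ := isModel_iff.mp hZ
    by_cases hZX : Z ⊆ X
    · exact Or.inl (hZX.antisymm hXZ)
    · obtain ⟨y, hyZ, hyX⟩ := Set.not_subset.mp hZX
      exact Or.inr (hZY.antisymm (hcond y ⟨hZY hyZ, hyX⟩ hyZ))
  · rintro (rfl | rfl)
    · have hZ : (seWitness Z Y).IsModel Z :=
        isModel_iff.mpr ⟨subset_rfl, fun y hy hyZ => absurd hyZ hy.2⟩
      exact ⟨hXY, hY, hXY, hZ, Set.inter_subset_right.trans (hset_app_subset hZ)⟩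
    · exact ⟨subset_rfl, hY, subset_rfl, hY, Set.inter_subset_left⟩

end seWitness

theorem Program.Mono.stable_union_seWitness_iff {P : Program α} (hP : P.Mono) {X Y : Set α}
    (hXY : X ⊆ Y) : (P ∪ seWitness X Y).Stable Y ↔ P.SE Y Y ∧ (P.SE X Y → X = Y) := by
  rw [(hP.union seWitness.mono).stable_iff]
  simp only [Program.se_union, seWitness.se_iff hXY, or_true, and_true]
  constructor
  · rintro ⟨hY, h⟩
    exact ⟨hY, fun hX => h X ⟨hX, Or.inl rfl⟩⟩
  · rintro ⟨hY, h⟩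
    refine ⟨hY, ?_⟩
    rintro Z ⟨hZ, rfl | rfl⟩
    exacts [h hZ, rfl]

theorem StrongEq.symm {P Q : Program α} (h : StrongEq P Q) : StrongEq Q P :=
  fun R hR M => (h R hR M).symm

theorem StrongEq.se {P Q : Program α} (hP : P.Mono) (hQ : Q.Mono) (h : StrongEq P Q)
    {X Y : Set α} (hX : P.SE X Y) : Q.SE X Y := by
  have hstable (X' : Set α) (hX' : X' ⊆ Y) :
      (P.SE Y Y ∧ (P.SE X' Y → X' = Y)) ↔ (Q.SE Y Y ∧ (Q.SE X' Y → X' = Y)) := by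
    rw [← hP.stable_union_seWitness_iff hX', ← hQ.stable_union_seWitness_iff hX']
    exact h _ seWitness.mono Y
  have hPY : P.SE Y Y := Program.se_self_iff.mpr hX.2.1
  have hQY : Q.SE Y Y := ((hstable Y subset_rfl).mp ⟨hPY, fun _ => rfl⟩).1
  by_contra hQX
  have hXY : X = Y := ((hstable X hX.1).mpr ⟨hQY, fun h => absurd h hQX⟩).2 hX
  exact hQX (hXY ▸ hQY)

/-- Strong equivalence is characterized by equality of SE-models. -/
theorem strong_equiv_iff_se {α : Type u} (P Q : Program α) (hP : P.Mono) (hQ : Q.Mono) :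
    StrongEq P Q ↔ ∀ X Y : Set α, P.SE X Y ↔ Q.SE X Y := by
  refine ⟨fun h X Y => ⟨h.se hP hQ, h.symm.se hQ hP⟩, fun h R hR M => ?_⟩
  simp only [(hP.union hR).stable_iff, (hQ.union hR).stable_iff, Program.se_union, h]
end
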